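/- Let X ⊂ H be an N-dimensional subspace of an infinite dimensional separable Hilbert space H, with orthonormal basis x₁,…,x_N, and let Q_n be orthogonal projections converging to the identity in the strong operator topology. Then there exists K ∈ ℕ such that for all n > K, the subspace X_n = Q_n X has dimension N; moreover, if ρ^n are positive semidefinite operators with support in X_n and tr ρ^n ≤ c for all n > K, then some subsequence ρ^{n_k} converges in trace norm to a positive semidefinite operator ρ with support in X. -/

import Mathlib

/-!
Since `X` is finite-dimensional, the pointwise convergence `Q n → 1` is uniform on `X`; hence
`Q n` is injective on `X` for large `n`, and every `w ∈ X_n = Q n X` lies within `o(‖w‖)` of `X`.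
A positive `ρ` supported on the `N`-dimensional space `X_n` satisfies `‖ρ‖ ≤ tr ρ ≤ c`, so for an
orthonormal basis `z_j` of `X_n` it is `ρ = ∑ j, |ρ z_j⟩⟨z_j|`, with all `2N` vectors bounded by
`max 1 c` and asymptotically in `X`. Compactness of bounded sets in `X^{2N}` gives a subsequence
along which these vectors converge to vectors of `X`. Since the trace norm of `∑ i, |a_i⟩⟨b_i|`
is at most `∑ i, ‖a_i‖ ‖b_i‖`, the operators then converge in trace norm, and positivity passes
to the limit.
-/

noncomputable section

open Filter Topology

local notation "⟪" x ", " y "⟫" => @inner ℂ _ _ x y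

/-- The trace norm of a bounded operator on a complex Hilbert space, defined as the
supremum over all pairs of finite orthonormal families of `∑ i, ‖⟪L (x i), y i⟫‖`.
For trace class operators this equals the sum of the singular values, and an operator
is trace class iff this is finite. -/
def traceNorm {H : Type*} [NormedAddCommGroup H] [InnerProductSpace ℂ H]
    (L : H →L[ℂ] H) : ENNReal :=
  ⨆ (n : ℕ) (x : Fin n → H) (_ : Orthonormal ℂ x) (y : Fin n → H) (_ : Orthonormal ℂ y),
    ∑ i, (‖⟪L (x i), y i⟫‖₊ : ENNReal)

/-- index set of a chosen Hilbert basis of `H` -/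
def hIndex (H : Type*) [NormedAddCommGroup H] [InnerProductSpace ℂ H] [CompleteSpace H] :
    Set H :=
  (exists_hilbertBasis ℂ H).choose

/-- a chosen Hilbert basis of `H` -/
def hBasis (H : Type*) [NormedAddCommGroup H] [InnerProductSpace ℂ H] [CompleteSpace H] :
    HilbertBasis (hIndex H) ℂ H :=
  (exists_hilbertBasis ℂ H).choose_spec.choose

/-- the trace of an operator (meaningful for trace class operators, where it is
independent of the chosen Hilbert basis) -/
def opTrace {H : Type*} [NormedAddCommGroup H] [InnerProductSpace ℂ H] [CompleteSpace H]
    (L : H →L[ℂ] H) : ℂ :=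
  ∑' i : hIndex H, ⟪(hBasis H i : H), L (hBasis H i)⟫

open InnerProductSpace

theorem ContinuousLinearMap.tendsto_of_tendsto_apply_of_finiteDimensional
    {𝕜 E F ι : Type*} [NontriviallyNormedField 𝕜] [CompleteSpace 𝕜]
    [NormedAddCommGroup E] [NormedSpace 𝕜 E] [FiniteDimensional 𝕜 E]
    [NormedAddCommGroup F] [NormedSpace 𝕜 F] {l : Filter ι} {T : ι → E →L[𝕜] F}
    {T₀ : E →L[𝕜] F} (h : ∀ v, Tendsto (fun i => T i v) l (𝓝 (T₀ v))) :
    Tendsto T l (𝓝 T₀) := by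
  set b := Module.finBasis 𝕜 E
  obtain ⟨C, -, hC⟩ := b.exists_opNorm_le (F := F)
  have hb : Tendsto (fun i => ∑ j, ‖(T i - T₀) (b j)‖) l (𝓝 0) := by
    simpa using tendsto_finsetSum Finset.univ fun j _ =>
      tendsto_iff_norm_sub_tendsto_zero.1 (h (b j))
  rw [tendsto_iff_norm_sub_tendsto_zero]
  refine squeeze_zero (fun i => norm_nonneg _) (fun i => hC ?_ fun j => ?_) (by
    simpa using hb.const_mul C)
  · exact Finset.sum_nonneg fun j _ => norm_nonneg _
  · exact Finset.single_le_sum (f := fun j => ‖(T i - T₀) (b j)‖)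
      (fun j _ => norm_nonneg _) (Finset.mem_univ j)

section NearIdentity

variable {𝕜 E : Type*} [RCLike 𝕜] [NormedAddCommGroup E] [InnerProductSpace 𝕜 E]

theorem Submodule.exists_tendsto_zero_forall_norm_apply_sub_le (X : Submodule 𝕜 E)
    [FiniteDimensional 𝕜 X] {T : ℕ → E →L[𝕜] E}
    (hT : ∀ v, Tendsto (fun n => T n v) atTop (𝓝 v)) :
    ∃ S : ℕ → ℝ, Tendsto S atTop (𝓝 0) ∧ ∀ n, ∀ v ∈ X, ‖T n v - v‖ ≤ S n * ‖v‖ := by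
  have hlim : Tendsto (fun n => T n ∘L X.subtypeL) atTop (𝓝 X.subtypeL) :=
    ContinuousLinearMap.tendsto_of_tendsto_apply_of_finiteDimensional fun v => hT v
  refine ⟨fun n => ‖T n ∘L X.subtypeL - X.subtypeL‖, ?_, fun n v hv => ?_⟩
  · simpa using tendsto_iff_norm_sub_tendsto_zero.1 hlim
  · exact (T n ∘L X.subtypeL - X.subtypeL).le_opNorm ⟨v, hv⟩

variable {X : Submodule 𝕜 E} {T : E →ₗ[𝕜] E} {s : ℝ}

theorem Submodule.finrank_map_eq_of_norm_apply_sub_le (hT : ∀ v ∈ X, ‖T v - v‖ ≤ s * ‖v‖)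
    (hs : s < 1) : Module.finrank 𝕜 (X.map T) = Module.finrank 𝕜 X := by
  have hinj : Function.Injective (T ∘ₗ X.subtype) := by
    rw [← LinearMap.ker_eq_bot, LinearMap.ker_eq_bot']
    rintro ⟨v, hv⟩ hTv
    have h := hT v hv
    simp only [LinearMap.comp_apply, Submodule.subtype_apply] at hTv
    rw [hTv, zero_sub, norm_neg] at h
    have : ‖v‖ = 0 := by nlinarith [norm_nonneg v]
    exact Subtype.ext (norm_eq_zero.1 this)
  rw [← LinearMap.finrank_range_of_inj hinj, LinearMap.range_comp, Submodule.range_subtype]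

theorem Submodule.norm_sub_starProjection_le_of_mem_map [X.HasOrthogonalProjection]
    (hT : ∀ v ∈ X, ‖T v - v‖ ≤ s * ‖v‖) (hs : s < 1) {w : E} (hw : w ∈ X.map T) :
    ‖w - X.starProjection w‖ ≤ s / (1 - s) * ‖w‖ := by
  obtain ⟨v, hv, rfl⟩ := Submodule.mem_map.1 hw
  rcases lt_or_ge s 0 with hs0 | hs0
  · obtain rfl : v = 0 :=
      norm_eq_zero.1 (by nlinarith [hT v hv, norm_nonneg (T v - v), norm_nonneg v])
    simp
  have hvw : (1 - s) * ‖v‖ ≤ ‖T v‖ := by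
    have := norm_sub_norm_le v (T v)
    rw [norm_sub_rev] at this
    nlinarith [hT v hv]
  calc ‖T v - X.starProjection (T v)‖ ≤ ‖T v - v‖ := by
        rw [Submodule.starProjection_minimal]
        exact ciInf_le ⟨0, by rintro - ⟨a, rfl⟩; positivity⟩ (⟨v, hv⟩ : X)
    _ ≤ s * ‖v‖ := hT v hv
    _ ≤ s / (1 - s) * ‖T v‖ := by
        rw [div_mul_eq_mul_div, le_div_iff₀ (by linarith)]
        nlinarith [mul_le_mul_of_nonneg_left hvw hs0]

end NearIdentity

section RankOne

variable {H : Type*} [NormedAddCommGroup H] [InnerProductSpace ℂ H] {ι : Type*} [Fintype ι]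

theorem Orthonormal.sum_norm_inner_mul_norm_inner_le {n : ℕ} {x y : Fin n → H}
    (hx : Orthonormal ℂ x) (hy : Orthonormal ℂ y) (a b : H) :
    ∑ i, ‖⟪x i, a⟫‖ * ‖⟪y i, b⟫‖ ≤ ‖a‖ * ‖b‖ := by
  have bessel : ∀ {z : Fin n → H}, Orthonormal ℂ z → ∀ c : H, √(∑ i, ‖⟪z i, c⟫‖ ^ 2) ≤ ‖c‖ :=
    fun hz c => (Real.sqrt_le_left (norm_nonneg c)).2 (hz.sum_inner_products_le c)
  calc ∑ i, ‖⟪x i, a⟫‖ * ‖⟪y i, b⟫‖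
      ≤ √(∑ i, ‖⟪x i, a⟫‖ ^ 2) * √(∑ i, ‖⟪y i, b⟫‖ ^ 2) :=
        Real.sum_mul_le_sqrt_mul_sqrt _ _ _
    _ ≤ ‖a‖ * ‖b‖ := by gcongr <;> [exact bessel hx a; exact bessel hy b]

theorem traceNorm_sum_rankOne_le (a b : ι → H) :
    traceNorm (∑ i, rankOne ℂ (a i) (b i)) ≤ ENNReal.ofReal (∑ i, ‖a i‖ * ‖b i‖) := by
  refine iSup_le fun n => iSup_le fun x => iSup_le fun hx => iSup_le fun y => iSup_le fun hy => ?_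
  have key : ∑ j, ‖⟪(∑ i, rankOne ℂ (a i) (b i)) (x j), y j⟫‖ ≤ ∑ i, ‖a i‖ * ‖b i‖ :=
    calc ∑ j, ‖⟪(∑ i, rankOne ℂ (a i) (b i)) (x j), y j⟫‖
        ≤ ∑ j, ∑ i, ‖⟪x j, b i⟫‖ * ‖⟪y j, a i⟫‖ := by
          gcongr with j
          simp only [sum_apply, sum_inner, inner_left_rankOne_apply]
          refine (norm_sum_le _ _).trans_eq (Finset.sum_congr rfl fun i _ => ?_)
          rw [norm_mul, norm_inner_symm (a i)]
      _ = ∑ i, ∑ j, ‖⟪x j, b i⟫‖ * ‖⟪y j, a i⟫‖ := Finset.sum_comm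
      _ ≤ ∑ i, ‖b i‖ * ‖a i‖ := by
          gcongr with i
          exact hx.sum_norm_inner_mul_norm_inner_le hy _ _
      _ = ∑ i, ‖a i‖ * ‖b i‖ := by simp only [mul_comm]
  calc ∑ j, (‖⟪(∑ i, rankOne ℂ (a i) (b i)) (x j), y j⟫‖₊ : ENNReal)
      = ENNReal.ofReal (∑ j, ‖⟪(∑ i, rankOne ℂ (a i) (b i)) (x j), y j⟫‖) := by
        rw [ENNReal.ofReal_sum_of_nonneg fun j _ => norm_nonneg _]
        simp only [ofReal_norm]
        rfl
    _ ≤ _ := ENNReal.ofReal_le_ofReal key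

/-- `sumRankOne p v = ∑ i, ⟪(p i).1, v⟫ • (p i).2`. -/
def sumRankOne (p : ι → H × H) : H →L[ℂ] H :=
  ∑ i, rankOne ℂ (p i).2 (p i).1

theorem continuous_rankOne : Continuous fun p : H × H => rankOne ℂ p.1 p.2 :=
  (ContinuousLinearMap.smulRightL ℂ H H).continuous₂.comp
    (((innerSL ℂ).continuous.comp continuous_snd).prodMk continuous_fst)

theorem continuous_sumRankOne : Continuous (sumRankOne : (ι → H × H) → H →L[ℂ] H) :=
  continuous_finsetSum _ fun i _ =>
    continuous_rankOne.comp ((continuous_apply i).snd.prodMk (continuous_apply i).fst)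

def SupportedIn (ρ : H →L[ℂ] H) (Y : Submodule ℂ H) : Prop :=
  (∀ v, ρ v ∈ Y) ∧ ∀ v ∈ Yᗮ, ρ v = 0

theorem supportedIn_sumRankOne {Y : Submodule ℂ H} {p : ι → H × H}
    (hp : ∀ i, (p i).1 ∈ Y ∧ (p i).2 ∈ Y) : SupportedIn (sumRankOne p) Y := by
  simp only [SupportedIn, sumRankOne, sum_apply, rankOne_apply]
  refine ⟨fun v => Y.sum_mem fun i _ => Y.smul_mem _ (hp i).2, fun v hv => ?_⟩
  exact Finset.sum_eq_zero fun i _ => by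
    rw [Submodule.inner_right_of_mem_orthogonal (hp i).1 hv, zero_smul]

theorem tendsto_traceNorm_sumRankOne_sub {p : ℕ → ι → H × H} {q : ι → H × H}
    (hp : Tendsto p atTop (𝓝 q)) :
    Tendsto (fun k => traceNorm (sumRankOne (p k) - sumRankOne q)) atTop (𝓝 0) := by
  set g : (ι → H × H) → ℝ := fun p =>
    ∑ i, (‖(p i).2 - (q i).2‖ * ‖(p i).1‖ + ‖(q i).2‖ * ‖(p i).1 - (q i).1‖)
  have hg : Tendsto (fun k => ENNReal.ofReal (g (p k))) atTop (𝓝 0) := by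
    have : Continuous g := by fun_prop
    simpa [g] using ENNReal.tendsto_ofReal ((this.tendsto q).comp hp)
  refine tendsto_of_tendsto_of_tendsto_of_le_of_le tendsto_const_nhds hg (fun _ => bot_le)
    fun k => ?_
  have hsplit : sumRankOne (p k) - sumRankOne q = ∑ s : ι ⊕ ι, rankOne ℂ
      (Sum.elim (fun i => (p k i).2 - (q i).2) (fun i => (q i).2) s)
      (Sum.elim (fun i => (p k i).1) (fun i => (p k i).1 - (q i).1) s) := by
    simp only [sumRankOne, Fintype.sum_sum_type, Sum.elim_inl, Sum.elim_inr, map_sub,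
      sub_apply, ← Finset.sum_add_distrib, ← Finset.sum_sub_distrib]
    exact Finset.sum_congr rfl fun i _ => by abel
  rw [hsplit]
  refine (traceNorm_sum_rankOne_le _ _).trans_eq ?_
  simp only [g, Fintype.sum_sum_type, Sum.elim_inl, Sum.elim_inr, Finset.sum_add_distrib]

theorem eq_sumRankOne_of_orthonormalBasis {Y : Submodule ℂ H} [Y.HasOrthogonalProjection]
    {ρ : H →L[ℂ] H} (hker : ∀ v ∈ Yᗮ, ρ v = 0) (b : OrthonormalBasis ι ℂ Y) :
    ρ = sumRankOne fun i => ((b i : H), ρ (b i)) := by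
  ext v
  have hv : ρ v = ρ (Y.starProjection v) := by
    rw [← sub_eq_zero, ← map_sub]
    exact hker _ (Y.sub_starProjection_mem_orthogonal v)
  rw [hv, Y.starProjection_apply, b.orthogonalProjectionOnto_apply_eq_sum]
  simp [sumRankOne, sum_apply]

end RankOne

section Trace

variable {H : Type*} [NormedAddCommGroup H] [InnerProductSpace ℂ H] [CompleteSpace H]
  {ι : Type*} [Fintype ι]

theorem opTrace_sum_rankOne (a b : ι → H) :
    opTrace (∑ i, rankOne ℂ (a i) (b i)) = ∑ i, ⟪b i, a i⟫ := by
  simp only [opTrace, sum_apply, inner_sum, inner_right_rankOne_apply]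
  rw [Summable.tsum_finsetSum fun i _ =>
    ((hBasis H).summable_inner_mul_inner (b i) (a i)).congr fun e => mul_comm _ _]
  exact Finset.sum_congr rfl fun i _ => by
    simp_rw [mul_comm ⟪_, a i⟫]
    exact (hBasis H).tsum_inner_mul_inner (b i) (a i)

theorem opTrace_eq_sum_inner {Y : Submodule ℂ H} [Y.HasOrthogonalProjection]
    {ρ : H →L[ℂ] H} (hker : ∀ v ∈ Yᗮ, ρ v = 0) (b : OrthonormalBasis ι ℂ Y) :
    opTrace ρ = ∑ i, ⟪(b i : H), ρ (b i)⟫ :=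
  calc opTrace ρ = opTrace (sumRankOne fun i => ((b i : H), ρ (b i))) :=
        congrArg opTrace (eq_sumRankOne_of_orthonormalBasis hker b)
    _ = _ := opTrace_sum_rankOne _ _

namespace ContinuousLinearMap.IsPositive

variable {Y : Submodule ℂ H} [FiniteDimensional ℂ Y] {ρ : H →L[ℂ] H}

theorem re_opTrace_nonneg (hρ : ρ.IsPositive) (hker : ∀ v ∈ Yᗮ, ρ v = 0) :
    0 ≤ (opTrace ρ).re := by
  rw [opTrace_eq_sum_inner hker (stdOrthonormalBasis ℂ Y), Complex.re_sum]
  exact Finset.sum_nonneg fun i _ => hρ.re_inner_nonneg_right _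

theorem reApplyInnerSelf_le_re_opTrace_of_norm_eq_one (hρ : ρ.IsPositive)
    (hker : ∀ v ∈ Yᗮ, ρ v = 0) {u : H} (hu : u ∈ Y) (hu1 : ‖u‖ = 1) :
    ρ.reApplyInnerSelf u ≤ (opTrace ρ).re := by
  have horth : Orthonormal ℂ ((↑) : ({⟨u, hu⟩} : Set Y) → Y) :=
    orthonormal_subsingleton_iff.2 fun ⟨_, rfl⟩ => hu1
  obtain ⟨s, b, hs, hb⟩ := horth.exists_orthonormalBasis_extension
  have hus : (⟨u, hu⟩ : Y) ∈ s := hs rfl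
  rw [opTrace_eq_sum_inner hker b, Complex.re_sum, ρ.reApplyInnerSelf_apply, inner_re_symm]
  refine le_of_eq_of_le ?_ (Finset.single_le_sum (f := fun i => (⟪(b i : H), ρ (b i)⟫).re)
    (fun i _ => hρ.re_inner_nonneg_right _) (Finset.mem_univ ⟨_, hus⟩))
  simp [hb]

theorem reApplyInnerSelf_le_of_mem (hρ : ρ.IsPositive) (hker : ∀ v ∈ Yᗮ, ρ v = 0) {w : H}
    (hw : w ∈ Y) : ρ.reApplyInnerSelf w ≤ (opTrace ρ).re * ‖w‖ ^ 2 := by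
  rcases eq_or_ne w 0 with rfl | hw0
  · simp [ρ.reApplyInnerSelf_apply]
  have hw' : 0 < ‖w‖ := norm_pos_iff.2 hw0
  have hunit : ‖((‖w‖⁻¹ : ℝ) : ℂ) • w‖ = 1 := by
    rw [norm_smul, Complex.norm_real, Real.norm_of_nonneg (by positivity),
      inv_mul_cancel₀ hw'.ne']
  have hscale : w = ((‖w‖ : ℝ) : ℂ) • ((‖w‖⁻¹ : ℝ) : ℂ) • w := by
    rw [smul_smul, ← Complex.ofReal_mul, mul_inv_cancel₀ hw'.ne', Complex.ofReal_one, one_smul]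
  rw [hscale, ρ.reApplyInnerSelf_smul, Complex.norm_real, Real.norm_of_nonneg hw'.le, ← hscale,
    mul_comm]
  gcongr
  exact hρ.reApplyInnerSelf_le_re_opTrace_of_norm_eq_one hker (Y.smul_mem _ hw) hunit

theorem reApplyInnerSelf_le (hρ : ρ.IsPositive) (hker : ∀ v ∈ Yᗮ, ρ v = 0) (v : H) :
    ρ.reApplyInnerSelf v ≤ (opTrace ρ).re * ‖v‖ ^ 2 := by
  set w := Y.starProjection v
  have hρw : ρ v = ρ w := by
    rw [← sub_eq_zero, ← map_sub]
    exact hker _ (Y.sub_starProjection_mem_orthogonal v)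
  have hvw : ρ.reApplyInnerSelf v = ρ.reApplyInnerSelf w := by
    have : ⟪ρ v, v⟫ = ⟪w, ρ w⟫ := by rw [hρw, hρ.inner_left_eq_inner_right, hρw]
    rw [ρ.reApplyInnerSelf_apply, ρ.reApplyInnerSelf_apply, this, inner_re_symm]
  rw [hvw]
  calc ρ.reApplyInnerSelf w ≤ (opTrace ρ).re * ‖w‖ ^ 2 :=
        hρ.reApplyInnerSelf_le_of_mem hker (Y.starProjection_apply_mem v)
    _ ≤ (opTrace ρ).re * ‖v‖ ^ 2 := by
        gcongr
        · exact hρ.re_opTrace_nonneg hker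
        · exact Y.norm_starProjection_apply_le v

theorem norm_le_re_opTrace (hρ : ρ.IsPositive) (hker : ∀ v ∈ Yᗮ, ρ v = 0) :
    ‖ρ‖ ≤ (opTrace ρ).re := by
  rw [ρ.norm_eq_iSup_rayleighQuotient hρ.isSymmetric]
  refine ciSup_le fun v => ?_
  rw [abs_of_nonneg (div_nonneg (hρ.2 v) (sq_nonneg _))]
  exact div_le_of_le_mul₀ (sq_nonneg _) (hρ.re_opTrace_nonneg hker) (hρ.reApplyInnerSelf_le hker v)

theorem exists_eq_sumRankOne (hρ : ρ.IsPositive) {N : ℕ} (hN : Module.finrank ℂ Y = N)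
    (hsupp : SupportedIn ρ Y) :
    ∃ p : Fin N → H × H, ρ = sumRankOne p ∧ ‖p‖ ≤ max 1 (opTrace ρ).re ∧
      ∀ j, (p j).1 ∈ Y ∧ (p j).2 ∈ Y := by
  set b := (stdOrthonormalBasis ℂ Y).reindex (finCongr hN)
  refine ⟨fun j => ((b j : H), ρ (b j)), eq_sumRankOne_of_orthonormalBasis hsupp.2 b, ?_,
    fun j => ⟨(b j).2, hsupp.1 _⟩⟩
  refine (pi_norm_le_iff_of_nonneg (le_max_of_le_left zero_le_one)).2 fun j => ?_
  refine norm_prod_le_iff.2 ⟨(b.norm_eq_one j).trans_le (le_max_left _ _), ?_⟩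
  calc ‖ρ (b j)‖ ≤ (opTrace ρ).re * ‖(b j : H)‖ :=
        ρ.le_of_opNorm_le (hρ.norm_le_re_opTrace hsupp.2) _
    _ ≤ max 1 (opTrace ρ).re := by
        rw [show ‖(b j : H)‖ = 1 from b.norm_eq_one j, mul_one]
        exact le_max_right _ _

end ContinuousLinearMap.IsPositive

end Trace

theorem exists_subseq_tendsto_of_tendsto_dist {E F : Type*} [PseudoMetricSpace E]
    [PseudoMetricSpace F] [ProperSpace F] {i : F → E} (hi : Continuous i) {u : ℕ → E}
    {v : ℕ → F} (hv : Bornology.IsBounded (Set.range v))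
    (huv : Tendsto (fun n => dist (u n) (i (v n))) atTop (𝓝 0)) :
    ∃ L : F, ∃ φ : ℕ → ℕ, StrictMono φ ∧ Tendsto (u ∘ φ) atTop (𝓝 (i L)) := by
  obtain ⟨L, -, φ, hφ, hL⟩ := tendsto_subseq_of_bounded hv (Set.mem_range_self ·)
  refine ⟨L, φ, hφ, ((hi.tendsto L).comp hL).congr_dist ?_⟩
  simpa only [Function.comp_def, dist_comm] using huv.comp hφ.tendsto_atTop

theorem exists_subseq_tendsto_traceNorm {H : Type*} [NormedAddCommGroup H]
    [InnerProductSpace ℂ H] [CompleteSpace H] {X : Submodule ℂ H} [FiniteDimensional ℂ X]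
    {N : ℕ} {Y : ℕ → Submodule ℂ H} [∀ n, FiniteDimensional ℂ (Y n)]
    (hY : ∀ n, Module.finrank ℂ (Y n) = N) {ε : ℕ → ℝ} (hε : Tendsto ε atTop (𝓝 0))
    (hYX : ∀ n, ∀ w ∈ Y n, ‖w - X.starProjection w‖ ≤ ε n * ‖w‖) {ρ : ℕ → H →L[ℂ] H} {c : ℝ}
    (hρ : ∀ n, (ρ n).IsPositive ∧ SupportedIn (ρ n) (Y n) ∧ (opTrace (ρ n)).re ≤ c) :
    ∃ φ : ℕ → ℕ, StrictMono φ ∧ ∃ ρ' : H →L[ℂ] H, ρ'.IsPositive ∧ SupportedIn ρ' X ∧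
      Tendsto (fun k => traceNorm (ρ (φ k) - ρ')) atTop (𝓝 0) := by
  choose p hρp hp_norm hpY using fun n => (hρ n).1.exists_eq_sumRankOne (hY n) (hρ n).2.1
  set R := max 1 c
  have hR : 0 ≤ R := le_max_of_le_left zero_le_one
  have hpR : ∀ n j, ‖(p n j).1‖ ≤ R ∧ ‖(p n j).2‖ ≤ R := fun n j =>
    norm_prod_le_iff.1 <| (norm_le_pi_norm _ j).trans <|
      (hp_norm n).trans (max_le_max le_rfl (hρ n).2.2)
  -- Projecting onto `X` moves `p n` by at most `|ε n| * R` into the proper space `(X × X) ^ N`.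
  let π : (Fin N → H × H) → (Fin N → X × X) := fun p j =>
    (X.orthogonalProjectionOnto (p j).1, X.orthogonalProjectionOnto (p j).2)
  let ι : (Fin N → X × X) → (Fin N → H × H) := fun q j => ((q j).1, (q j).2)
  have hι : Continuous ι := by fun_prop
  have hbdd : Bornology.IsBounded (Set.range fun n => π (p n)) := by
    refine isBounded_iff_forall_norm_le.2 ⟨R, ?_⟩
    rintro _ ⟨n, rfl⟩
    refine (pi_norm_le_iff_of_nonneg hR).2 fun j => norm_prod_le_iff.2 ⟨?_, ?_⟩
    · exact (X.norm_orthogonalProjectionOnto_apply_le _).trans (hpR n j).1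
    · exact (X.norm_orthogonalProjectionOnto_apply_le _).trans (hpR n j).2
  have hclose : ∀ n, ∀ w ∈ Y n, ‖w‖ ≤ R →
      dist w (X.orthogonalProjectionOnto w : H) ≤ |ε n| * R := fun n w hw hwR => by
    rw [dist_eq_norm, ← X.starProjection_apply]
    exact (hYX n w hw).trans (mul_le_mul (le_abs_self _) hwR (norm_nonneg _) (abs_nonneg _))
  have hdist : ∀ n, dist (p n) (ι (π (p n))) ≤ |ε n| * R := fun n =>
    (dist_pi_le_iff (by positivity)).2 fun j => max_le
      (hclose n _ (hpY n j).1 (hpR n j).1) (hclose n _ (hpY n j).2 (hpR n j).2)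
  obtain ⟨q, φ, hφ, hpq⟩ := exists_subseq_tendsto_of_tendsto_dist hι hbdd <|
    squeeze_zero (fun n => dist_nonneg) hdist (by simpa using hε.abs.mul_const R)
  refine ⟨φ, hφ, sumRankOne (ι q), ?_, supportedIn_sumRankOne fun j => ⟨(q j).1.2, (q j).2.2⟩, ?_⟩
  · rw [← ContinuousLinearMap.nonneg_iff_isPositive]
    refine ge_of_tendsto' ((continuous_sumRankOne.tendsto _).comp hpq) fun k => ?_
    simpa only [Function.comp_apply, ← hρp] using
      (ContinuousLinearMap.nonneg_iff_isPositive _).2 (hρ (φ k)).1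
  · simp only [hρp]
    exact tendsto_traceNorm_sumRankOne_sub hpq

theorem compress_subspace_compactness_general
    {H : Type*} [NormedAddCommGroup H] [InnerProductSpace ℂ H] [CompleteSpace H]
    (X : Submodule ℂ H) [FiniteDimensional ℂ X] (N : ℕ)
    (hN : Module.finrank ℂ X = N)
    (Q : ℕ → H →L[ℂ] H)
    (hQI : ∀ v : H, Tendsto (fun n => Q n v) atTop (𝓝 v))
    (c : ℝ) :
    ∃ K : ℕ, (∀ n, K < n → Module.finrank ℂ (X.map (Q n : H →ₗ[ℂ] H)) = N) ∧
      ∀ ρs : ℕ → H →L[ℂ] H,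
        (∀ n, K < n → (ρs n).IsPositive ∧ (∀ v : H, ρs n v ∈ X.map (Q n : H →ₗ[ℂ] H)) ∧
          (∀ v ∈ (X.map (Q n : H →ₗ[ℂ] H))ᗮ, ρs n v = 0) ∧ (opTrace (ρs n)).re ≤ c) →
        ∃ φ : ℕ → ℕ, StrictMono φ ∧ ∃ ρ' : H →L[ℂ] H, ρ'.IsPositive ∧
          (∀ v : H, ρ' v ∈ X) ∧ (∀ v ∈ Xᗮ, ρ' v = 0) ∧
          Tendsto (fun k => traceNorm (ρs (φ k) - ρ')) atTop (𝓝 0) := by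
  obtain ⟨S, hS, hQX⟩ := X.exists_tendsto_zero_forall_norm_apply_sub_le hQI
  obtain ⟨K, hK⟩ := eventually_atTop.1 (hS.eventually (gt_mem_nhds one_pos))
  have hdim : ∀ n, K < n → Module.finrank ℂ (X.map (Q n : H →ₗ[ℂ] H)) = N := fun n hn =>
    (X.finrank_map_eq_of_norm_apply_sub_le (hQX n) (hK n hn.le)).trans hN
  refine ⟨K, hdim, fun ρs hρs => ?_⟩
  have hshift : ∀ n, K < n + (K + 1) := fun n => by omega
  have hε : Tendsto (fun n => S (n + (K + 1)) / (1 - S (n + (K + 1)))) atTop (𝓝 0) := by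
    have h := (tendsto_add_atTop_iff_nat (K + 1)).2 hS
    rw [show (0 : ℝ) = 0 / (1 - 0) by simp]
    exact h.div (tendsto_const_nhds.sub h) (by norm_num)
  obtain ⟨φ, hφ, ρ', hρ', ⟨hρ'X, hρ'ker⟩, hlim⟩ := exists_subseq_tendsto_traceNorm
    (fun n => hdim _ (hshift n)) hε
    (fun n w hw => X.norm_sub_starProjection_le_of_mem_map (hQX _) (hK _ (hshift n).le) hw)
    (ρ := fun n => ρs (n + (K + 1))) fun n =>
      let ⟨hpos, hmaps, hker, htr⟩ := hρs _ (hshift n); ⟨hpos, ⟨hmaps, hker⟩, htr⟩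
  exact ⟨fun k => φ k + (K + 1), fun a b hab => by simpa using hφ hab, ρ', hρ', hρ'X, hρ'ker, hlim⟩

/-- Lemma `convfdsup`: for an `N`-dimensional subspace `X` of an infinite
dimensional separable Hilbert space and orthogonal projections `Q_n → I` in the strong
operator topology, eventually `dim Q_n X = N`; moreover, any positive semidefinite
operators `ρ^n` supported in `X_n = Q_n X` with uniformly bounded traces have a
subsequence converging in trace norm to a positive semidefinite operator supported
in `X`. -/
theorem compress_subspace_compactness
    {H : Type*} [NormedAddCommGroup H] [InnerProductSpace ℂ H] [CompleteSpace H]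
    [TopologicalSpace.SeparableSpace H] (hH : ¬ FiniteDimensional ℂ H)
    (X : Submodule ℂ H) [FiniteDimensional ℂ X] (N : ℕ)
    (hN : Module.finrank ℂ X = N)
    (x : Fin N → H) (hx : Orthonormal ℂ x) (hxX : ∀ i, x i ∈ X)
    (hspan : X = Submodule.span ℂ (Set.range x))
    (Q : ℕ → H →L[ℂ] H) (hQsa : ∀ n, IsSelfAdjoint (Q n))
    (hQidem : ∀ n, (Q n).comp (Q n) = Q n)
    (hQI : ∀ v : H, Tendsto (fun n => Q n v) atTop (𝓝 v))
    (c : ℝ) (hc : 0 < c) :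
    ∃ K : ℕ, (∀ n, K < n → Module.finrank ℂ (X.map (Q n : H →ₗ[ℂ] H)) = N) ∧
      ∀ ρs : ℕ → H →L[ℂ] H,
        (∀ n, K < n → (ρs n).IsPositive ∧ (∀ v : H, ρs n v ∈ X.map (Q n : H →ₗ[ℂ] H)) ∧
          (∀ v ∈ (X.map (Q n : H →ₗ[ℂ] H))ᗮ, ρs n v = 0) ∧ (opTrace (ρs n)).re ≤ c) →
        ∃ φ : ℕ → ℕ, StrictMono φ ∧ ∃ ρ' : H →L[ℂ] H, ρ'.IsPositive ∧
          (∀ v : H, ρ' v ∈ X) ∧ (∀ v ∈ Xᗮ, ρ' v = 0) ∧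
          Tendsto (fun k => traceNorm (ρs (φ k) - ρ')) atTop (𝓝 0) :=
  compress_subspace_compactness_general X N hN Q hQI c
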